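/- arXiv:1407.4147 — 8 statements merged into one kernel-verified Lean document; each statement's English description precedes it below -/
import Mathlib

section
/- For any k with 1 ≤ k ≤ n, the projection π_k : ℝ^n → ℝ^k sending (x_1, …, x_n) to (x_{n−k+1}, …, x_n) maps the twisted-cube support C(c,ℓ) surjectively onto C(k); that is, π_k(C(c,ℓ)) = C(k). -/
/-- The affine functions `A_j(x) = ℓ_j − Σ_{k>j} c_{jk} x_k` (for the top index the sum
is empty so `A_n = ℓ_n`). Indices are 0-based via `Fin n`. -/
def Afun (n : ℕ) (c : Fin n → Fin n → ℤ) (L : Fin n → ℤ) (j : Fin n) (x : Fin n → ℝ) : ℝ :=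
  (L j : ℝ) - ∑ k ∈ Finset.univ.filter (fun k => j < k), (c j k : ℝ) * x k

/-- Condition (S-k): `A_k(x) < x_k < 0` or `0 ≤ x_k ≤ A_k(x)`. -/
def Scond (n : ℕ) (c : Fin n → Fin n → ℤ) (L : Fin n → ℤ) (k : Fin n) (x : Fin n → ℝ) : Prop :=
  (Afun n c L k x < x k ∧ x k < 0) ∨ (0 ≤ x k ∧ x k ≤ Afun n c L k x)

/-- The twisted-cube support `C(c,ℓ)`. -/
def Cset (n : ℕ) (c : Fin n → Fin n → ℤ) (L : Fin n → ℤ) : Set (Fin n → ℝ) :=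
  {x | ∀ k, Scond n c L k x}

/-- The polytope `P(c,ℓ) = {x : 0 ≤ x_j ≤ A_j(x) for all j}`. -/
def Pset (n : ℕ) (c : Fin n → Fin n → ℤ) (L : Fin n → ℤ) : Set (Fin n → ℝ) :=
  {x | ∀ j, 0 ≤ x j ∧ x j ≤ Afun n c L j x}

/-- Condition (P): for each `k`, whenever the coordinates above `k` satisfy
`0 ≤ x_j ≤ A_j(x)`, one has `A_k(x) ≥ 0`. (For the top index this says `ℓ_n ≥ 0`.) -/
def CondP (n : ℕ) (c : Fin n → Fin n → ℤ) (L : Fin n → ℤ) : Prop :=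
  ∀ k : Fin n, ∀ x : Fin n → ℝ,
    (∀ j : Fin n, k < j → 0 ≤ x j ∧ x j ≤ Afun n c L j x) →
    0 ≤ Afun n c L k x

/-- The Cartier data `m_σ` for a sign vector `σ` (`true` = `+`, `false` = `−`), defined by
downward recursion: `m_{σ,j} = 0` if `σ_j = +`, and `m_{σ,j} = A_j(m_σ)` if `σ_j = −`. -/
noncomputable def mvec (n : ℕ) (c : Fin n → Fin n → ℤ) (L : Fin n → ℤ)
    (σ : Fin n → Bool) (j : Fin n) : ℝ :=
  if σ j then 0
  else (L j : ℝ) - ∑ k ∈ (Finset.univ.filter (fun k => j < k)).attach,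
      (c j k.1 : ℝ) * mvec n c L σ k.1
termination_by n - j.1
decreasing_by
  have hk := Fin.lt_iff_val_lt_val.mp (Finset.mem_filter.mp k.2).2
  have := k.1.isLt
  omega


lemma Afun_congr (n : ℕ) (c : Fin n → Fin n → ℤ) (L : Fin n → ℤ) (j : Fin n)
    {x x' : Fin n → ℝ} (h : ∀ m, j < m → x m = x' m) :
    Afun n c L j x = Afun n c L j x' := by
  unfold Afun
  congr 1
  exact Finset.sum_congr rfl fun m hm => by
    rw [h m (Finset.mem_filter.mp hm).2]

lemma Scond_congr (n : ℕ) (c : Fin n → Fin n → ℤ) (L : Fin n → ℤ) (j : Fin n)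
    {x x' : Fin n → ℝ} (h : ∀ m, j ≤ m → x m = x' m) :
    Scond n c L j x ↔ Scond n c L j x' := by
  unfold Scond
  rw [Afun_congr n c L j (fun m hm => h m hm.le), h j le_rfl]

noncomputable def extv (n k : ℕ) (c : Fin n → Fin n → ℤ) (L : Fin n → ℤ)
    (y : Fin k → ℝ) (j : Fin n) : ℝ :=
  if h : n - k ≤ j.1 then y ⟨j.1 - (n - k), by have := j.isLt; omega⟩
  else
    let a := (L j : ℝ) - ∑ m ∈ (Finset.univ.filter (fun m => j < m)).attach,
      (c j m.1 : ℝ) * extv n k c L y m.1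
    if 0 ≤ a then 0 else a / 2
termination_by n - j.1
decreasing_by
  have hm := Fin.lt_iff_val_lt_val.mp (Finset.mem_filter.mp m.2).2
  have := m.1.isLt
  omega

lemma extv_high (n k : ℕ) (c : Fin n → Fin n → ℤ) (L : Fin n → ℤ)
    (y : Fin k → ℝ) (j : Fin n) (h : n - k ≤ j.1) :
    extv n k c L y j = y ⟨j.1 - (n - k), by have := j.isLt; omega⟩ := by
  rw [extv]; simp [h]

lemma extv_low (n k : ℕ) (c : Fin n → Fin n → ℤ) (L : Fin n → ℤ)
    (y : Fin k → ℝ) (j : Fin n) (h : ¬ n - k ≤ j.1) :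
    extv n k c L y j =
      if 0 ≤ Afun n c L j (extv n k c L y) then 0
      else Afun n c L j (extv n k c L y) / 2 := by
  rw [extv]
  simp only [h, if_false]
  have : (∑ m ∈ (Finset.univ.filter (fun m => j < m)).attach,
      (c j m.1 : ℝ) * extv n k c L y m.1)
      = ∑ m ∈ Finset.univ.filter (fun m => j < m), (c j m : ℝ) * extv n k c L y m :=
    Finset.sum_attach _ (fun m => (c j m : ℝ) * extv n k c L y m)
  rw [this]
  rfl

/-- the projection onto the last `k` coordinates maps `C(c,ℓ)` surjectively
onto `C(k)`, the set of points of `ℝ^k` (identified with the last `k` coordinates of `ℝ^n`)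
satisfying conditions (S-n), …, (S-(n−k+1)). -/
theorem projection_image_eq_Ck (n : ℕ) (hn : 0 < n)
    (c : Fin n → Fin n → ℤ) (L : Fin n → ℤ)
    (k : ℕ) (hk1 : 1 ≤ k) (hkn : k ≤ n) :
    (fun x : Fin n → ℝ => fun i : Fin k => x ⟨n - k + i.1, by have := i.isLt; omega⟩) ''
        Cset n c L
      = {y : Fin k → ℝ | ∀ j : Fin n, n - k ≤ j.1 →
          Scond n c L j
            (fun j' : Fin n =>
              if h : n - k ≤ j'.1 then y ⟨j'.1 - (n - k), by have := j'.isLt; omega⟩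
              else 0)} := by
  ext y
  constructor
  · rintro ⟨x, hx, rfl⟩
    intro j hj
    rw [Scond_congr n c L j (x' := x)]
    · exact hx j
    · intro m hm
      have hm' : n - k ≤ m.1 := le_trans hj hm
      simp only [dif_pos hm']
      congr 1
      exact Fin.ext (by simp; omega)
  · intro hy
    refine ⟨extv n k c L y, ?_, ?_⟩
    · intro j
      by_cases h : n - k ≤ j.1
      · rw [Scond_congr n c L j
          (x' := fun j' : Fin n => if h : n - k ≤ j'.1 then
            y ⟨j'.1 - (n - k), by have := j'.isLt; omega⟩ else 0)]
        · exact hy j h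
        · intro m hm
          have hm' : n - k ≤ m.1 := le_trans h hm
          rw [extv_high n k c L y m hm', dif_pos hm']
      · by_cases ha : 0 ≤ Afun n c L j (extv n k c L y)
        · right
          rw [extv_low n k c L y j h, if_pos ha]
          exact ⟨le_refl 0, ha⟩
        · left
          rw [extv_low n k c L y j h, if_neg ha]
          push_neg at ha
          constructor <;> linarith
    · funext i
      have hi : n - k ≤ (⟨n - k + i.1, by have := i.isLt; omega⟩ : Fin n).1 := by
        simp
      simp only [extv_high n k c L y _ hi]
      congr 1
      exact Fin.ext (by simp)
end

section
/- If the constants c and ℓ satisfy condition (P), then the twisted-cube support C(c,ℓ) equals the closed convex polytope {x ∈ ℝ^n : 0 ≤ x_j ≤ A_j(x) for all 1 ≤ j ≤ n}. -/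
/-- if `(c,ℓ)` satisfies condition (P) then `C(c,ℓ)` equals the polytope
`{x : 0 ≤ x_j ≤ A_j(x) for all j}`. -/
theorem Cset_eq_Pset_of_condP (n : ℕ) (hn : 0 < n)
    (c : Fin n → Fin n → ℤ) (L : Fin n → ℤ)
    (hP : CondP n c L) :
    Cset n c L = Pset n c L := by
  ext x
  constructor
  · intro hx
    have H : ∀ m : ℕ, ∀ j : Fin n, n - j.1 ≤ m → (0 ≤ x j ∧ x j ≤ Afun n c L j x) := by
      intro m
      induction m with
      | zero => intro j hj; have := j.isLt; omega
      | succ m ih =>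
        intro j hj
        have hgt : ∀ k : Fin n, j < k → 0 ≤ x k ∧ x k ≤ Afun n c L k x := by
          intro k hk
          have hk' := Fin.lt_iff_val_lt_val.mp hk
          exact ih k (by omega)
        have hA := hP j x hgt
        rcases hx j with ⟨h1, h2⟩ | h
        · linarith
        · exact h
    exact fun j => H n j (by omega)
  · intro hx k
    exact Or.inr (hx k)
end

section
/- For every sign vector σ ∈ {+,−}^n, the integer vector m_σ lies in the closure (with respect to the Euclidean topology) of the twisted-cube support C(c,ℓ). -/
noncomputable def yvec (n : ℕ) (c : Fin n → Fin n → ℤ) (L : Fin n → ℤ)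
    (σ : Fin n → Bool) (t : ℝ) (j : Fin n) : ℝ :=
  let a : ℝ := (L j : ℝ) - ∑ k ∈ (Finset.univ.filter (fun k => j < k)).attach,
      (c j k.1 : ℝ) * yvec n c L σ t k.1
  if σ j then (if 0 ≤ a then 0 else a * t) else (if 0 ≤ a then a else a * (1 - t))
termination_by n - j.1
decreasing_by
  have hk := Fin.lt_iff_val_lt_val.mp (Finset.mem_filter.mp k.2).2
  have := k.1.isLt
  omega

lemma mvec_eq (n : ℕ) (c : Fin n → Fin n → ℤ) (L : Fin n → ℤ) (σ : Fin n → Bool) (j : Fin n) :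
    mvec n c L σ j = if σ j then 0 else Afun n c L j (mvec n c L σ) := by
  rw [mvec, Afun, Finset.sum_attach _ (fun k => (c j k : ℝ) * mvec n c L σ k)]

lemma yvec_eq (n : ℕ) (c : Fin n → Fin n → ℤ) (L : Fin n → ℤ) (σ : Fin n → Bool) (t : ℝ)
    (j : Fin n) :
    yvec n c L σ t j =
      if σ j then (if 0 ≤ Afun n c L j (yvec n c L σ t) then 0
        else Afun n c L j (yvec n c L σ t) * t)
      else (if 0 ≤ Afun n c L j (yvec n c L σ t) then Afun n c L j (yvec n c L σ t)
        else Afun n c L j (yvec n c L σ t) * (1 - t)) := by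
  rw [yvec, Afun, Finset.sum_attach _ (fun k => (c j k : ℝ) * yvec n c L σ t k)]

lemma yvec_mem (n : ℕ) (c : Fin n → Fin n → ℤ) (L : Fin n → ℤ) (σ : Fin n → Bool) (t : ℝ)
    (ht : t ∈ Set.Ioo (0:ℝ) 1) : yvec n c L σ t ∈ Cset n c L := by
  intro k
  have h := yvec_eq n c L σ t k
  set a := Afun n c L k (yvec n c L σ t) with ha
  unfold Scond
  rw [← ha, h]
  obtain ⟨ht0, ht1⟩ := ht
  rcases le_or_gt 0 a with hle | hlt
  · right
    split <;> simp [hle]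
  · left
    rw [if_neg (not_le.mpr hlt), if_neg (not_le.mpr hlt)]
    split <;> constructor <;> nlinarith

lemma yvec_tendsto (n : ℕ) (c : Fin n → Fin n → ℤ) (L : Fin n → ℤ) (σ : Fin n → Bool)
    (j : Fin n) :
    Filter.Tendsto (fun t => yvec n c L σ t j) (nhdsWithin 0 (Set.Ioi 0))
      (nhds (mvec n c L σ j)) := by
  have IH : ∀ k : Fin n, j < k →
      Filter.Tendsto (fun t => yvec n c L σ t k) (nhdsWithin 0 (Set.Ioi 0))
        (nhds (mvec n c L σ k)) := fun k _ => yvec_tendsto n c L σ k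
  have hA : Filter.Tendsto (fun t => Afun n c L j (yvec n c L σ t)) (nhdsWithin 0 (Set.Ioi 0))
      (nhds (Afun n c L j (mvec n c L σ))) := by
    unfold Afun
    exact tendsto_const_nhds.sub (tendsto_finset_sum _ fun k hk =>
      tendsto_const_nhds.mul (IH k (Finset.mem_filter.mp hk).2))
  have ht0 : Filter.Tendsto (fun t : ℝ => t) (nhdsWithin 0 (Set.Ioi 0)) (nhds 0) :=
    Filter.tendsto_id.mono_left nhdsWithin_le_nhds
  have hbound : Filter.Tendsto (fun t => |Afun n c L j (yvec n c L σ t)| * t)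
      (nhdsWithin 0 (Set.Ioi 0)) (nhds 0) := by
    have := hA.abs.mul ht0
    simpa using this
  rw [mvec_eq]
  cases hσ : σ j with
  | true =>
    simp only [if_pos rfl]
    apply squeeze_zero_norm' _ hbound
    filter_upwards [self_mem_nhdsWithin] with t (htpos : (0:ℝ) < t)
    rw [yvec_eq, if_pos hσ]
    split
    · simp; positivity
    · rw [Real.norm_eq_abs, abs_mul, abs_of_pos htpos]
  | false =>
    simp only [Bool.false_eq_true, if_neg (Bool.false_ne_true)]
    have hdiff : Filter.Tendsto
        (fun t => yvec n c L σ t j - Afun n c L j (yvec n c L σ t))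
        (nhdsWithin 0 (Set.Ioi 0)) (nhds 0) := by
      apply squeeze_zero_norm' _ hbound
      filter_upwards [self_mem_nhdsWithin] with t (htpos : (0:ℝ) < t)
      rw [yvec_eq, if_neg (by simp [hσ])]
      split
      · simp; positivity
      · rw [Real.norm_eq_abs,
          show Afun n c L j (yvec n c L σ t) * (1 - t) - Afun n c L j (yvec n c L σ t)
            = -(Afun n c L j (yvec n c L σ t) * t) from by ring,
          abs_neg, abs_mul, abs_of_pos htpos]
    have := hA.add hdiff
    simpa using this
termination_by n - j.1
decreasing_by
  have hk := Fin.lt_iff_val_lt_val.mp ‹j < k›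
  have := k.isLt
  omega

/-- for every sign vector `σ`, the vector `m_σ` lies in the closure of
the twisted-cube support `C(c,ℓ)`. -/
theorem mvec_mem_closure_Cset (n : ℕ) (hn : 0 < n)
    (c : Fin n → Fin n → ℤ) (L : Fin n → ℤ)
    (σ : Fin n → Bool) :
    mvec n c L σ ∈ closure (Cset n c L) := by
  apply mem_closure_of_tendsto (f := fun t => yvec n c L σ t) (b := nhdsWithin 0 (Set.Ioi 0))
  · exact tendsto_pi_nhds.2 fun j => yvec_tendsto n c L σ j
  · filter_upwards [Ioo_mem_nhdsGT_of_mem (by simp : (0:ℝ) ∈ Set.Ico (0:ℝ) 1)] with t ht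
    exact yvec_mem n c L σ t ht
end

section
/- The twisted-cube support C(c,ℓ) is closed in ℝ^n if and only if C(c,ℓ) equals the polytope P(c,ℓ) := {x ∈ ℝ^n : 0 ≤ x_j ≤ A_j(x) for all 1 ≤ j ≤ n}. -/
/-- `Afun j` only depends on coordinates above `j`. -/
theorem afun_congr {n : ℕ} {c : Fin n → Fin n → ℤ} {L : Fin n → ℤ} (j : Fin n)
    {x y : Fin n → ℝ} (h : ∀ m, j < m → y m = x m) :
    Afun n c L j y = Afun n c L j x := by
  unfold Afun
  congr 1
  refine Finset.sum_congr rfl fun m hm => ?_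
  rw [h m (Finset.mem_filter.mp hm).2]

/-- Continuity of `Afun j`. -/
theorem afun_continuous (n : ℕ) (c : Fin n → Fin n → ℤ) (L : Fin n → ℤ) (j : Fin n) :
    Continuous (fun x => Afun n c L j x) := by
  unfold Afun
  exact continuous_const.sub (continuous_finset_sum _ fun m _ =>
    continuous_const.mul (continuous_apply m))

theorem isClosed_Pset (n : ℕ) (c : Fin n → Fin n → ℤ) (L : Fin n → ℤ) :
    IsClosed (Pset n c L) := by
  have : Pset n c L = ⋂ j, ({x : Fin n → ℝ | 0 ≤ x j} ∩ {x | x j ≤ Afun n c L j x}) := by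
    ext x
    simp [Pset, Set.mem_iInter, forall_and]
  rw [this]
  refine isClosed_iInter fun j => IsClosed.inter ?_ ?_
  · exact isClosed_le continuous_const (continuous_apply j)
  · exact isClosed_le (continuous_apply j) (afun_continuous n c L j)

/-- The path used to show non-closedness: above `k` copy `x`, at `k` scale by `t`,
below `k` pick a canonical point satisfying the S-condition. -/
noncomputable def ypath (n : ℕ) (c : Fin n → Fin n → ℤ) (L : Fin n → ℤ)
    (x : Fin n → ℝ) (k : Fin n) (t : ℝ) (j : Fin n) : ℝ :=
  if k < j then x j
  else if j = k then t * x k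
  else min 0 (((L j : ℝ) - ∑ m ∈ (Finset.univ.filter (fun m => j < m)).attach,
      (c j m.1 : ℝ) * ypath n c L x k t m.1) / 2)
termination_by n - j.1
decreasing_by
  have hm := Fin.lt_iff_val_lt_val.mp (Finset.mem_filter.mp m.2).2
  have := m.1.isLt
  omega

theorem ypath_of_gt {n : ℕ} {c : Fin n → Fin n → ℤ} {L : Fin n → ℤ}
    {x : Fin n → ℝ} {k : Fin n} {t : ℝ} {j : Fin n} (h : k < j) :
    ypath n c L x k t j = x j := by
  rw [ypath, if_pos h]

theorem ypath_self {n : ℕ} {c : Fin n → Fin n → ℤ} {L : Fin n → ℤ}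
    {x : Fin n → ℝ} {k : Fin n} {t : ℝ} :
    ypath n c L x k t k = t * x k := by
  rw [ypath, if_neg (lt_irrefl k), if_pos rfl]

theorem ypath_of_lt {n : ℕ} {c : Fin n → Fin n → ℤ} {L : Fin n → ℤ}
    {x : Fin n → ℝ} {k : Fin n} {t : ℝ} {j : Fin n} (h : j < k) :
    ypath n c L x k t j = min 0 (Afun n c L j (ypath n c L x k t) / 2) := by
  rw [ypath, if_neg (asymm h), if_neg (ne_of_lt h)]
  congr 2
  unfold Afun
  congr 1
  exact Finset.sum_attach (Finset.univ.filter fun m => j < m) (fun m => (c j m : ℝ) * ypath n c L x k t m)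

theorem ypath_cont (n : ℕ) (c : Fin n → Fin n → ℤ) (L : Fin n → ℤ)
    (x : Fin n → ℝ) (k : Fin n) (j : Fin n) :
    Continuous (fun t => ypath n c L x k t j) := by
  rcases lt_trichotomy j k with h | h | h
  · have : (fun t => ypath n c L x k t j)
        = fun t => min 0 (((L j : ℝ) - ∑ m ∈ (Finset.univ.filter (fun m => j < m)).attach,
            (c j m.1 : ℝ) * ypath n c L x k t m.1) / 2) := by
      funext t
      rw [ypath, if_neg (asymm h), if_neg (ne_of_lt h)]
    rw [this]
    refine continuous_const.min (Continuous.div_const (continuous_const.sub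
      (continuous_finset_sum _ fun m _ => continuous_const.mul ?_)) 2)
    exact ypath_cont n c L x k m.1
  · subst h
    simp only [ypath_self]
    exact continuous_id.mul continuous_const
  · simp only [ypath_of_gt h]
    exact continuous_const
termination_by n - j.1
decreasing_by
  have hm := Fin.lt_iff_val_lt_val.mp (Finset.mem_filter.mp m.2).2
  have := m.1.isLt
  omega

theorem ypath_agree_above {n : ℕ} {c : Fin n → Fin n → ℤ} {L : Fin n → ℤ}
    {x : Fin n → ℝ} {k : Fin n} {t : ℝ} :
    ∀ m, k < m → ypath n c L x k t m = x m :=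
  fun _ hm => ypath_of_gt hm

theorem ypath_mem {n : ℕ} {c : Fin n → Fin n → ℤ} {L : Fin n → ℤ}
    {x : Fin n → ℝ} {k : Fin n} (hx : x ∈ Cset n c L)
    (hA : Afun n c L k x < x k) (hxk : x k < 0) {t : ℝ} (ht0 : 0 < t) (ht1 : t ≤ 1) :
    ypath n c L x k t ∈ Cset n c L := by
  intro j
  rcases lt_trichotomy j k with h | h | h
  · rw [Scond, ypath_of_lt h]
    rcases le_or_gt 0 (Afun n c L j (ypath n c L x k t)) with hA' | hA'
    · right
      rw [min_eq_left (by linarith)]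
      exact ⟨le_refl _, hA'⟩
    · left
      rw [min_eq_right (by linarith)]
      constructor <;> linarith
  · have heq : Afun n c L k (ypath n c L x k t) = Afun n c L k x :=
      afun_congr k fun m hm => ypath_agree_above m hm
    rw [Scond, h, ypath_self, heq]
    left
    constructor
    · nlinarith
    · exact mul_neg_of_pos_of_neg ht0 hxk
  · have heq : Afun n c L j (ypath n c L x k t) = Afun n c L j x :=
      afun_congr j fun m hm => ypath_agree_above m (lt_trans h hm)
    rw [Scond, ypath_of_gt h, heq]
    exact hx j

/-- `C(c,ℓ)` is closed iff `C(c,ℓ)` equals the polytope `P(c,ℓ)`. -/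
theorem isClosed_Cset_iff_eq_Pset (n : ℕ) (hn : 0 < n)
    (c : Fin n → Fin n → ℤ) (L : Fin n → ℤ) :
    IsClosed (Cset n c L) ↔ Cset n c L = Pset n c L := by
  constructor
  · intro hclosed
    refine Set.Subset.antisymm ?_ (fun x hx k => Or.inr (hx k))
    intro x hx k
    rcases hx k with ⟨hA, hxk⟩ | h
    · exfalso
      -- the limit point of the path
      set z := ypath n c L x k 0 with hz
      have hzk : z k = 0 := by rw [hz, ypath_self, zero_mul]
      have hAz : Afun n c L k z = Afun n c L k x :=
        afun_congr k fun m hm => ypath_agree_above m hm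
      have htend : Filter.Tendsto (fun i : ℕ => ypath n c L x k (1 / (i + 1)))
          Filter.atTop (nhds z) := by
        rw [tendsto_pi_nhds]
        intro j
        exact ((ypath_cont n c L x k j).tendsto 0).comp
          tendsto_one_div_add_atTop_nhds_zero_nat
      have hmem : ∀ i : ℕ, ypath n c L x k (1 / (i + 1 : ℝ)) ∈ Cset n c L := by
        intro i
        refine ypath_mem hx hA hxk (by positivity) ?_
        rw [div_le_one (by positivity)]
        have : (0 : ℝ) ≤ i := Nat.cast_nonneg i
        linarith
      have hzC : z ∈ Cset n c L :=
        hclosed.mem_of_tendsto htend (Filter.Eventually.of_forall hmem)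
      rcases hzC k with ⟨_, h2⟩ | ⟨_, h2⟩
      · rw [hzk] at h2; linarith
      · rw [hzk, hAz] at h2; linarith
    · exact h
  · intro heq
    rw [heq]
    exact isClosed_Pset n c L
end

section
/- If the twisted-cube support C(c,ℓ) is a convex subset of ℝ^n and ℓ_k > 0 for all k with 1 ≤ k ≤ n, then C(c,ℓ) is closed in ℝ^n; equivalently, C(c,ℓ) equals the polytope {x ∈ ℝ^n : 0 ≤ x_j ≤ A_j(x) for all 1 ≤ j ≤ n}. -/
/-- if `C(c,ℓ)` is convex and all `ℓ_k` are strictly positive, then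
`C(c,ℓ)` is closed; equivalently, it equals the polytope `{x : 0 ≤ x_j ≤ A_j(x) ∀ j}`. -/
theorem isClosed_of_convex_of_ell_pos (n : ℕ) (hn : 0 < n)
    (c : Fin n → Fin n → ℤ) (L : Fin n → ℤ)
    (hconv : Convex ℝ (Cset n c L)) (hpos : ∀ k : Fin n, 0 < L k) :
    IsClosed (Cset n c L) ∧ Cset n c L = Pset n c L := by
  have hPC : Pset n c L ⊆ Cset n c L := fun x hx k => Or.inr (hx k)
  have hCP : Cset n c L ⊆ Pset n c L := by
    intro x hx
    by_contra hxP
    have hk : ∃ k, Afun n c L k x < x k ∧ x k < 0 := by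
      by_contra h
      push_neg at h
      apply hxP
      intro j
      rcases hx j with h1 | h2
      · exact absurd h1.2 (not_lt.mpr (h j h1.1))
      · exact h2
    obtain ⟨k, h1, h2⟩ := hk
    have h0 : (0 : Fin n → ℝ) ∈ Cset n c L := by
      intro j
      right
      refine ⟨le_refl _, ?_⟩
      simp only [Afun, Pi.zero_apply, mul_zero, Finset.sum_const_zero, sub_zero]
      exact_mod_cast (hpos j).le
    set S : ℝ := ∑ k' ∈ Finset.univ.filter (fun k' => k < k'), (c k k' : ℝ) * x k' with hS
    have hLk : (0 : ℝ) < (L k : ℝ) := by exact_mod_cast hpos k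
    set D : ℝ := |S + x k| + 1 with hD
    have hDpos : 0 < D := by positivity
    set t : ℝ := min 1 ((L k : ℝ) / (2 * D)) with ht
    have ht0 : 0 < t := lt_min one_pos (by positivity)
    have ht1 : t ≤ 1 := min_le_left _ _
    have htx : t • x ∈ Cset n c L := by
      have := hconv h0 hx (sub_nonneg.mpr ht1) ht0.le (by ring)
      simpa using this
    have hxk : (t • x) k < 0 := by
      simpa [smul_eq_mul] using mul_neg_of_pos_of_neg ht0 h2
    have hS1 : Scond n c L k (t • x) := htx k
    have hbr : Afun n c L k (t • x) < (t • x) k := by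
      rcases hS1 with h | h
      · exact h.1
      · exact absurd h.1 (not_le.mpr hxk)
    have hA : Afun n c L k (t • x) = (L k : ℝ) - t * S := by
      simp only [Afun, Pi.smul_apply, smul_eq_mul, hS, Finset.mul_sum]
      congr 1
      apply Finset.sum_congr rfl
      intros
      ring
    have hlt : (L k : ℝ) < t * (S + x k) := by
      have : (t • x) k = t * x k := by simp [smul_eq_mul]
      rw [hA, this] at hbr
      linarith
    have hub : t * (S + x k) ≤ (L k : ℝ) / 2 := by
      have h3 : t * (S + x k) ≤ t * |S + x k| := by
        exact mul_le_mul_of_nonneg_left (le_abs_self _) ht0.le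
      have h4 : t * |S + x k| ≤ t * D := by
        apply mul_le_mul_of_nonneg_left _ ht0.le
        simp [hD]
      have h5 : t ≤ (L k : ℝ) / (2 * D) := min_le_right _ _
      have h6 : t * D ≤ (L k : ℝ) / (2 * D) * D := mul_le_mul_of_nonneg_right h5 hDpos.le
      have h7 : (L k : ℝ) / (2 * D) * D = (L k : ℝ) / 2 := by field_simp
      linarith
    linarith
  have heq : Cset n c L = Pset n c L := le_antisymm hCP hPC
  have hclosed : IsClosed (Pset n c L) := by
    have : Pset n c L = ⋂ j : Fin n, ({x : Fin n → ℝ | 0 ≤ x j} ∩ {x | x j ≤ Afun n c L j x}) := by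
      ext x
      simp [Pset, Set.mem_iInter]
    rw [this]
    refine isClosed_iInter fun j => IsClosed.inter ?_ ?_
    · exact isClosed_le continuous_const (continuous_apply j)
    · exact isClosed_le (continuous_apply j)
        (continuous_const.sub (continuous_finset_sum _ fun k _ =>
          continuous_const.mul (continuous_apply k)))
  exact ⟨heq ▸ hclosed, heq⟩
end

section
/- Suppose the constants come from representation-theoretic data: given a finite index set I, an integer matrix A : I × I → ℤ with A(i,i) = 2 for all i ∈ I (the Cartan matrix, whose diagonal entries are ⟨α_i, α_i^∨⟩ = 2), integer weights λ : I → ℤ, and a word β : {1, …, n} → I, set c_{ij} = A(β_i, β_j) for 1 ≤ i < j ≤ n and ℓ_j = λ(β_j) for 1 ≤ j ≤ n. If the constants c and ℓ satisfy condition (P), then λ(β_j) ≥ 0 for every j with 1 ≤ j ≤ n; that is, if the simple root indexed by i appears in the word, then λ(i) ≥ 0. -/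
/-- in the representation-theoretic setting (`c_{ij} = ⟨α_{β_j}, α_{β_i}^∨⟩`,
`ℓ_j = ⟨λ, α_{β_j}^∨⟩`, with Cartan matrix diagonal entries `2`), condition (P) forces
`λ(β_j) ≥ 0` for every letter `β_j` appearing in the word. -/
theorem lam_nonneg_of_condP_rep (n : ℕ) (hn : 0 < n)
    (I : Type*) [Fintype I]
    (A : I → I → ℤ) (hA : ∀ i : I, A i i = 2)
    (lam : I → ℤ) (β : Fin n → I)
    (hP : CondP n (fun i j => A (β i) (β j)) (fun j => lam (β j))) :
    ∀ j : Fin n, 0 ≤ lam (β j) := by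
  have hA0 : ∀ j : Fin n,
      Afun n (fun i j => A (β i) (β j)) (fun j => lam (β j)) j (fun _ => 0)
        = (lam (β j) : ℝ) := by
    intro j
    simp [Afun]
  have key : ∀ m : ℕ, ∀ j : Fin n, n - j.1 ≤ m → (0 : ℤ) ≤ lam (β j) := by
    intro m
    induction m with
    | zero => intro j h; have := j.isLt; omega
    | succ m ih =>
      intro j hj
      have h0 := hP j (fun _ => 0) (by
        intro k hk
        refine ⟨le_refl _, ?_⟩
        rw [hA0 k]
        have hk' : j.1 < k.1 := hk
        have := j.isLt
        have := ih k (by omega); show (0:ℝ) ≤ _; exact_mod_cast this)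
      rw [hA0 j] at h0
      exact_mod_cast h0
  intro j
  exact key n j (by omega)
end

section
/- Suppose the constants come from representation-theoretic data: given a finite index set I, an integer matrix A : I × I → ℤ with A(i,i) = 2 for all i ∈ I (the Cartan matrix, whose diagonal entries are ⟨α_i, α_i^∨⟩ = 2), integer weights λ : I → ℤ, and a word β : {1, …, n} → I, set c_{ij} = A(β_i, β_j) for 1 ≤ i < j ≤ n and ℓ_j = λ(β_j) for 1 ≤ j ≤ n. If the constants c and ℓ satisfy condition (P) and there exist indices j < k with β_j = β_k (i.e., some simple root appears more than once in the word), then λ(β_j) = 0. -/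
noncomputable def xvec (n : ℕ) (L : Fin n → ℤ) (k : Fin n) : Fin n → ℝ :=
  fun m => if m = k then (L k : ℝ) else 0

lemma Afun_xvec_ge (n : ℕ) (c : Fin n → Fin n → ℤ) (L : Fin n → ℤ) (k m : Fin n)
    (h : ¬ m < k) : Afun n c L m (xvec n L k) = L m := by
  unfold Afun
  have hz : ∀ k' ∈ Finset.univ.filter (fun k' => m < k'),
      (c m k' : ℝ) * xvec n L k k' = 0 := by
    intro k' hk'
    have hmk' : m < k' := (Finset.mem_filter.mp hk').2
    have hne : k' ≠ k := by rintro rfl; exact h hmk'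
    simp [xvec, hne]
  rw [Finset.sum_congr rfl hz, Finset.sum_const_zero, sub_zero]

lemma Afun_xvec_lt (n : ℕ) (c : Fin n → Fin n → ℤ) (L : Fin n → ℤ) (k m : Fin n)
    (h : m < k) : Afun n c L m (xvec n L k) = (L m : ℝ) - (c m k : ℝ) * (L k : ℝ) := by
  unfold Afun xvec
  have : ∀ k' ∈ Finset.univ.filter (fun k' => m < k'),
      (c m k' : ℝ) * (if k' = k then (L k : ℝ) else 0)
      = if k' = k then (c m k' : ℝ) * (L k : ℝ) else 0 := by
    intro k' _; split <;> simp
  rw [Finset.sum_congr rfl this, Finset.sum_ite_eq']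
  simp [h]

lemma L_nonneg (n : ℕ) (c : Fin n → Fin n → ℤ) (L : Fin n → ℤ) (hP : CondP n c L)
    (m : Fin n) : (0:ℝ) ≤ L m := by
  have h := hP m 0 (fun j hj => by
    refine ⟨le_refl 0, ?_⟩
    have := L_nonneg n c L hP j
    simpa [Afun] using this)
  simpa [Afun] using h
termination_by n - m.1
decreasing_by
  have := Fin.lt_iff_val_lt_val.mp hj
  have := j.isLt
  omega

lemma feas (n : ℕ) (c : Fin n → Fin n → ℤ) (L : Fin n → ℤ) (hP : CondP n c L)
    (k : Fin n) (hLk : (0:ℝ) ≤ L k) (m : Fin n) :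
    0 ≤ xvec n L k m ∧ xvec n L k m ≤ Afun n c L m (xvec n L k) := by
  have hA : 0 ≤ Afun n c L m (xvec n L k) :=
    hP m _ (fun j hj => feas n c L hP k hLk j)
  by_cases hm : m = k
  · subst hm
    rw [Afun_xvec_ge n c L m m (lt_irrefl m)]
    simp [xvec, hLk]
  · simp only [xvec, if_neg hm]
    exact ⟨le_refl 0, hA⟩
termination_by n - m.1
decreasing_by
  have := Fin.lt_iff_val_lt_val.mp hj
  have := j.isLt
  omega

theorem lam_eq_zero_of_condP_repeat' (n : ℕ) (hn : 0 < n)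
    (I : Type*) [Fintype I]
    (A : I → I → ℤ) (hA : ∀ i : I, A i i = 2)
    (lam : I → ℤ) (β : Fin n → I)
    (hP : CondP n (fun i j => A (β i) (β j)) (fun j => lam (β j))) :
    ∀ j k : Fin n, j < k → β j = β k → lam (β j) = 0 := by
  intro j k hjk hβ
  set c : Fin n → Fin n → ℤ := fun i j => A (β i) (β j) with hc
  set L : Fin n → ℤ := fun j => lam (β j) with hL
  have hLk : (0:ℝ) ≤ L k := L_nonneg n c L hP k
  have h := hP j (xvec n L k) (fun m _ => feas n c L hP k hLk m)
  rw [Afun_xvec_lt n c L k j hjk] at h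
  have hcjk : c j k = 2 := by rw [hc]; simp only; rw [hβ, hA]
  have hLj : L j = L k := by rw [hL]; simp only; rw [hβ]
  rw [hcjk, hLj] at h
  push_cast at h
  have : (lam (β j) : ℝ) = 0 := by
    rw [hβ]
    have : (L k : ℝ) = lam (β k) := by rw [hL]
    linarith [hLk, h, this]
  exact_mod_cast this

/-- in the representation-theoretic setting, if condition (P) holds and a
simple root appears more than once in the word (`β_j = β_k` with `j < k`), then the
corresponding weight coefficient vanishes: `λ(β_j) = 0`. -/
theorem lam_eq_zero_of_condP_repeat (n : ℕ) (hn : 0 < n)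
    (I : Type*) [Fintype I]
    (A : I → I → ℤ) (hA : ∀ i : I, A i i = 2)
    (lam : I → ℤ) (β : Fin n → I)
    (hP : CondP n (fun i j => A (β i) (β j)) (fun j => lam (β j))) :
    ∀ j k : Fin n, j < k → β j = β k → lam (β j) = 0 :=
  lam_eq_zero_of_condP_repeat' n hn I A hA lam β hP
end

section
/- If m_{σ,k} ≥ 0 for every sign vector σ ∈ {+,−}^n and every k with 1 ≤ k ≤ n, then the constants c and ℓ satisfy condition (P). -/
lemma mvec_congr (n : ℕ) (c : Fin n → Fin n → ℤ) (L : Fin n → ℤ)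
    (σ σ' : Fin n → Bool) (j : Fin n) (hσ : ∀ i, j ≤ i → σ i = σ' i) :
    mvec n c L σ j = mvec n c L σ' j := by
  rw [mvec, mvec, hσ j le_rfl]
  split
  · rfl
  · congr 1
    apply Finset.sum_congr rfl
    intro k _
    have hk : j < k.1 := (Finset.mem_filter.mp k.2).2
    rw [mvec_congr n c L σ σ' k.1 (fun i hi => hσ i (le_of_lt (lt_of_lt_of_le hk hi)))]
termination_by n - j.1
decreasing_by
  have hk := Fin.lt_iff_val_lt_val.mp (Finset.mem_filter.mp k.2).2
  have := k.1.isLt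
  omega

lemma mvec_false (n : ℕ) (c : Fin n → Fin n → ℤ) (L : Fin n → ℤ)
    (σ : Fin n → Bool) (j : Fin n) (hσ : σ j = false) :
    mvec n c L σ j = (L j : ℝ) - ∑ k ∈ Finset.univ.filter (fun k => j < k),
      (c j k : ℝ) * mvec n c L σ k := by
  rw [mvec, hσ]
  simp [Finset.sum_attach (Finset.univ.filter (fun k => j < k))
    (fun k => (c j k : ℝ) * mvec n c L σ k)]

lemma key_min (n : ℕ) (c : Fin n → Fin n → ℤ) (L : Fin n → ℤ)
    (k : Fin n) (b : Fin n → ℝ) (x : Fin n → ℝ)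
    (hx : ∀ j, k < j → 0 ≤ x j ∧ x j ≤ Afun n c L j x) :
    ∃ σ : Fin n → Bool,
      ∑ j ∈ Finset.univ.filter (fun j => k < j), b j * mvec n c L σ j ≤
      ∑ j ∈ Finset.univ.filter (fun j => k < j), b j * x j := by
  by_cases hk : k.1 + 1 < n
  · set j0 : Fin n := ⟨k.1 + 1, hk⟩ with hj0
    have hkj0 : k < j0 := by simp [Fin.lt_def, hj0]
    have hsplit : Finset.univ.filter (fun j => k < j)
        = insert j0 (Finset.univ.filter (fun j => j0 < j)) := by
      ext j
      simp only [Finset.mem_filter, Finset.mem_insert, Finset.mem_univ, true_and,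
        Fin.lt_def, hj0, Fin.ext_iff]
      omega
    have hnm : j0 ∉ Finset.univ.filter (fun j => j0 < j) := by simp
    have hx' : ∀ j, j0 < j → 0 ≤ x j ∧ x j ≤ Afun n c L j x :=
      fun j hj => hx j (lt_trans hkj0 hj)
    by_cases hb : 0 ≤ b j0
    · obtain ⟨σ, hσ⟩ := key_min n c L j0 b x hx'
      refine ⟨Function.update σ j0 true, ?_⟩
      rw [hsplit, Finset.sum_insert hnm, Finset.sum_insert hnm]
      have h1 : mvec n c L (Function.update σ j0 true) j0 = 0 := by
        rw [mvec]; simp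
      have h2 : ∑ j ∈ Finset.univ.filter (fun j => j0 < j),
          b j * mvec n c L (Function.update σ j0 true) j
          = ∑ j ∈ Finset.univ.filter (fun j => j0 < j), b j * mvec n c L σ j := by
        refine Finset.sum_congr rfl fun j hj => ?_
        have hjj0 : j0 < j := (Finset.mem_filter.mp hj).2
        rw [mvec_congr n c L (Function.update σ j0 true) σ j
          (fun i hi => Function.update_of_ne (by exact ne_of_gt (lt_of_lt_of_le hjj0 hi)) _ _)]
      rw [h1, h2]
      have hx0 : 0 ≤ x j0 := (hx j0 hkj0).1
      nlinarith [mul_nonneg hb hx0]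
    · push_neg at hb
      set b' : Fin n → ℝ := fun j => b j - b j0 * (c j0 j : ℝ) with hb'
      obtain ⟨σ, hσ⟩ := key_min n c L j0 b' x hx'
      set σ' := Function.update σ j0 false with hσ'
      have hupd : ∀ j, j0 < j → mvec n c L σ' j = mvec n c L σ j := by
        intro j hj
        exact mvec_congr n c L σ' σ j
          (fun i hi => Function.update_of_ne (ne_of_gt (lt_of_lt_of_le hj hi)) _ _)
      refine ⟨σ', ?_⟩
      rw [hsplit, Finset.sum_insert hnm, Finset.sum_insert hnm]
      have hm0 : mvec n c L σ' j0 = (L j0 : ℝ) -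
          ∑ j ∈ Finset.univ.filter (fun j => j0 < j), (c j0 j : ℝ) * mvec n c L σ j := by
        rw [mvec_false n c L σ' j0 (Function.update_self _ _ _)]
        congr 1
        exact Finset.sum_congr rfl fun j hj => by
          rw [hupd j (Finset.mem_filter.mp hj).2]
      have hsm : ∑ j ∈ Finset.univ.filter (fun j => j0 < j), b j * mvec n c L σ' j
          = ∑ j ∈ Finset.univ.filter (fun j => j0 < j), b j * mvec n c L σ j :=
        Finset.sum_congr rfl fun j hj => by rw [hupd j (Finset.mem_filter.mp hj).2]
      rw [hm0, hsm]
      have hexp : ∀ y : Fin n → ℝ,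
          ∑ j ∈ Finset.univ.filter (fun j => j0 < j), b' j * y j
          = ∑ j ∈ Finset.univ.filter (fun j => j0 < j), b j * y j
            - b j0 * ∑ j ∈ Finset.univ.filter (fun j => j0 < j), (c j0 j : ℝ) * y j := by
        intro y
        rw [Finset.mul_sum, ← Finset.sum_sub_distrib]
        exact Finset.sum_congr rfl fun j _ => by simp [hb']; ring
      rw [hexp, hexp] at hσ
      have hxA : x j0 ≤ Afun n c L j0 x := (hx j0 hkj0).2
      rw [Afun] at hxA
      have hmul : b j0 * ((L j0 : ℝ) -
          ∑ j ∈ Finset.univ.filter (fun j => j0 < j), (c j0 j : ℝ) * x j) ≤ b j0 * x j0 :=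
        mul_le_mul_of_nonpos_left hxA (le_of_lt hb)
      nlinarith
  · refine ⟨fun _ => true, le_of_eq ?_⟩
    have : Finset.univ.filter (fun j => k < j) = (∅ : Finset (Fin n)) := by
      ext j
      simp only [Finset.mem_filter, Finset.mem_univ, true_and, Finset.notMem_empty,
        iff_false, Fin.lt_def, not_lt]
      omega
    simp [this]
termination_by n - k.1

/-- if every coordinate of every `m_σ` is nonnegative then `(c,ℓ)` satisfies
condition (P). -/
theorem condP_of_mvec_nonneg (n : ℕ) (hn : 0 < n)
    (c : Fin n → Fin n → ℤ) (L : Fin n → ℤ)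
    (h : ∀ (σ : Fin n → Bool) (k : Fin n), 0 ≤ mvec n c L σ k) :
    CondP n c L := by
  intro k x hx
  obtain ⟨σ, hσ⟩ := key_min n c L k (fun j => -(c k j : ℝ)) x hx
  set σ' := Function.update σ k false with hσ'
  have hupd : ∀ j, k < j → mvec n c L σ' j = mvec n c L σ j := by
    intro j hj
    exact mvec_congr n c L σ' σ j
      (fun i hi => Function.update_of_ne (ne_of_gt (lt_of_lt_of_le hj hi)) _ _)
  have hm : mvec n c L σ' k = (L k : ℝ) -
      ∑ j ∈ Finset.univ.filter (fun j => k < j), (c k j : ℝ) * mvec n c L σ j := by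
    rw [mvec_false n c L σ' k (Function.update_self _ _ _)]
    congr 1
    exact Finset.sum_congr rfl fun j hj => by rw [hupd j (Finset.mem_filter.mp hj).2]
  have h0 := h σ' k
  rw [hm] at h0
  rw [Afun]
  have hneg : ∀ y : Fin n → ℝ,
      ∑ j ∈ Finset.univ.filter (fun j => k < j), (fun j => -(c k j : ℝ)) j * y j
      = - ∑ j ∈ Finset.univ.filter (fun j => k < j), (c k j : ℝ) * y j := by
    intro y
    rw [← Finset.sum_neg_distrib]
    exact Finset.sum_congr rfl fun j _ => by ring
  rw [hneg, hneg] at hσ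
  linarith
end
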